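/- arXiv:2309.05379 — 2 statements merged into one kernel-verified Lean document; each statement's English description precedes it below -/
import Mathlib

section
/- (Case 1.1 of the social-cost analysis.) Consider a facility-location instance with |N₁| ≥ |N₂| and |N₁ \ N₂| ≥ |N₁ ∩ N₂|, let m₁ be the median position of N₁ \ N₂ and m₂ the median position of N₂, and suppose t(m₂) ≠ t(m₁). Then the solution w = (t(m₁), t(m₂)) satisfies SC(w) ≤ 7 · SC(y₁,y₂) for every feasible solution (y₁,y₂). -/
open Finset

/-- The smallest element of `C` minimizing the distance to `p`. -/
noncomputable def tloc (C : Finset ℝ) (p : ℝ) : ℝ :=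
  WithTop.untopD 0 (C.filter fun c => ∀ c' ∈ C, |p - c| ≤ |p - c'|).min

/-- The smallest element of `C \ {tloc C p}` minimizing the distance to `p`. -/
noncomputable def sloc (C : Finset ℝ) (p : ℝ) : ℝ :=
  tloc (C.erase (tloc C p)) p

/-- The `⌈n/2⌉`-th smallest element of a multiset of reals (0 if empty). -/
noncomputable def medOf (l : Multiset ℝ) : ℝ :=
  (l.sort (· ≤ ·)).getD ((Multiset.card l + 1) / 2 - 1) 0

/-- The median position of the agents in `S` with positions `x`. -/
noncomputable def medianPos (S : Finset ℕ) (x : ℕ → ℝ) : ℝ :=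
  medOf (S.val.map x)

/-- The Conditional-Median mechanism, assuming facility 1 is (weakly) more popular. -/
noncomputable def condMedian (x : ℕ → ℝ) (N1 N2 : Finset ℕ) (C : Finset ℝ) : ℝ × ℝ :=
  if (N1 ∩ N2).card ≤ (N1 \ N2).card then
    let m1 := medianPos (N1 \ N2) x
    let m2 := medianPos N2 x
    let w1 := tloc C m1
    (w1, if tloc C m2 ≠ w1 then tloc C m2 else sloc C m2)
  else
    let m12 := medianPos (N1 ∩ N2) x
    (tloc C m12, sloc C m12)

/-- The output of the Conditional-Median mechanism (roles swapped if `|N₂| > |N₁|`). -/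
noncomputable def mechOutput (x : ℕ → ℝ) (N1 N2 : Finset ℕ) (C : Finset ℝ) : ℝ × ℝ :=
  if N2.card ≤ N1.card then condMedian x N1 N2 C
  else (condMedian x N2 N1 C).swap

/-- The cost of agent `i` at solution `y`: the distance to the farthest approved facility. -/
noncomputable def cost (x : ℕ → ℝ) (N1 N2 : Finset ℕ) (i : ℕ) (y : ℝ × ℝ) : ℝ :=
  if i ∈ N1 then
    if i ∈ N2 then max |x i - y.1| |x i - y.2| else |x i - y.1|
  else |x i - y.2|

/-- The social cost. -/
noncomputable def SC (x : ℕ → ℝ) (N1 N2 N : Finset ℕ) (y : ℝ × ℝ) : ℝ :=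
  ∑ i ∈ N, cost x N1 N2 i y

/-- The max cost. -/
noncomputable def MC (x : ℕ → ℝ) (N1 N2 N : Finset ℕ) (hN : N.Nonempty) (y : ℝ × ℝ) : ℝ :=
  N.sup' hN fun i => cost x N1 N2 i y

/-!
The median `m` of the positions of a set `S` of agents minimises `∑ i ∈ S, |x i - c|`, and pairing
the `j`-th smallest with the `j`-th largest position shows `|S| * |m - c| ≤ 2 * ∑ i ∈ S, |x i - c|`.
As `t(m)` is at least as close to `m` as any candidate `c`, locating a facility at `t(m)` costs `S`
at most `3 * ∑ i ∈ S, |x i - c|`. Applied to `N₁ \ N₂` with `c = y₁` and to `N₂` with `c = y₂`,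
this accounts for `3` of the factor `7`. An agent of `N₁ ∩ N₂` also pays its distance to `t(m₁)`,
which exceeds its distance to `y₁` by at most `|y₁ - t(m₁)| ≤ 2 * |m₁ - y₁|`; since
`|N₁ ∩ N₂| ≤ |N₁ \ N₂|`, these excesses add up to at most `4 * ∑ i ∈ N₁ \ N₂, |x i - y₁|`.
-/

lemma abs_sub_add_abs_sub_le_of_mem_uIcc {a b m : ℝ} (hm : m ∈ Set.uIcc a b) (c : ℝ) :
    |a - m| + |b - m| ≤ |a - c| + |b - c| := by
  rcases Set.mem_uIcc.1 hm with ⟨h₁, h₂⟩ | ⟨h₁, h₂⟩ <;>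
    cases abs_cases (a - m) <;> cases abs_cases (b - m) <;>
    cases abs_cases (a - c) <;> cases abs_cases (b - c) <;> linarith

lemma abs_sub_le_add_of_mem_uIcc {a b m : ℝ} (hm : m ∈ Set.uIcc a b) (c : ℝ) :
    |m - c| ≤ |a - c| + |b - c| := by
  rcases Set.mem_uIcc.1 hm with ⟨h₁, h₂⟩ | ⟨h₁, h₂⟩ <;>
    cases abs_cases (m - c) <;> cases abs_cases (a - c) <;> cases abs_cases (b - c) <;> linarith

lemma sum_map_le_sum_map_of_add_rev_le {α : Type*} (L : List α) (f g : α → ℝ)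
    (h : ∀ j : Fin L.length, f L[j] + f L[j.rev] ≤ g L[j] + g L[j.rev]) :
    (L.map f).sum ≤ (L.map g).sum := by
  have hrev (φ : α → ℝ) : ∑ j : Fin L.length, φ L[j.rev] = ∑ j : Fin L.length, φ L[j] :=
    Equiv.sum_comp Fin.revPerm fun j => φ L[j]
  have hsum := Finset.sum_le_sum fun j (_ : j ∈ univ) => h j
  rw [sum_add_distrib, sum_add_distrib, hrev, hrev] at hsum
  simp only [Fin.getElem_fin] at hsum
  rw [← Fin.sum_univ_fun_getElem, ← Fin.sum_univ_fun_getElem]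
  linarith

lemma getD_median_mem_uIcc {L : List ℝ} (hL : L.SortedLE) (j : Fin L.length) :
    L.getD ((L.length + 1) / 2 - 1) 0 ∈ Set.uIcc L[j] L[j.rev] := by
  have hj := j.isLt
  rw [List.getD_eq_getElem _ _ (by omega), Set.mem_uIcc]
  simp only [Fin.getElem_fin, Fin.val_rev]
  rcases le_or_gt (j : ℕ) ((L.length + 1) / 2 - 1) with hjk | hkj
  · exact Or.inl ⟨hL.getElem_le_getElem_of_le hjk, hL.getElem_le_getElem_of_le (by omega)⟩
  · exact Or.inr ⟨hL.getElem_le_getElem_of_le (by omega), hL.getElem_le_getElem_of_le hkj.le⟩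

lemma sum_map_sort {α : Type*} [AddCommMonoid α] (s : Multiset ℝ) (f : ℝ → α) :
    ((s.sort (· ≤ ·)).map f).sum = (s.map f).sum := by
  conv_rhs => rw [← Multiset.sort_eq s (· ≤ ·)]
  rw [Multiset.map_coe, Multiset.sum_coe]

lemma medOf_mem_uIcc (s : Multiset ℝ) (j : Fin (s.sort (· ≤ ·)).length) :
    medOf s ∈ Set.uIcc (s.sort (· ≤ ·))[j] (s.sort (· ≤ ·))[j.rev] := by
  rw [medOf, ← Multiset.length_sort (· ≤ ·)]
  exact getD_median_mem_uIcc (Multiset.pairwise_sort s _).sortedLE j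

lemma sum_abs_sub_medOf_le (s : Multiset ℝ) (c : ℝ) :
    (s.map fun a => |a - medOf s|).sum ≤ (s.map fun a => |a - c|).sum := by
  rw [← sum_map_sort, ← sum_map_sort]
  exact sum_map_le_sum_map_of_add_rev_le _ _ _ fun j =>
    abs_sub_add_abs_sub_le_of_mem_uIcc (medOf_mem_uIcc s j) c

lemma card_mul_abs_medOf_sub_le (s : Multiset ℝ) (c : ℝ) :
    Multiset.card s * |medOf s - c| ≤ 2 * (s.map fun a => |a - c|).sum := by
  have hconst : Multiset.card s * |medOf s - c| = (s.map fun _ => |medOf s - c|).sum := by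
    simp
  rw [hconst, ← Multiset.sum_map_mul_left, ← sum_map_sort, ← sum_map_sort]
  refine sum_map_le_sum_map_of_add_rev_le _ _ _ fun j => ?_
  have := abs_sub_le_add_of_mem_uIcc (medOf_mem_uIcc s j) c
  linarith

lemma sum_abs_sub_medianPos_le (S : Finset ℕ) (x : ℕ → ℝ) (c : ℝ) :
    ∑ i ∈ S, |x i - medianPos S x| ≤ ∑ i ∈ S, |x i - c| := by
  simpa only [medianPos, Multiset.map_map, Function.comp_def, Finset.sum_map_val] using
    sum_abs_sub_medOf_le (S.val.map x) c

lemma card_mul_abs_medianPos_sub_le (S : Finset ℕ) (x : ℕ → ℝ) (c : ℝ) :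
    S.card * |medianPos S x - c| ≤ 2 * ∑ i ∈ S, |x i - c| := by
  simpa only [medianPos, Multiset.map_map, Function.comp_def, Finset.sum_map_val,
    Multiset.card_map, Finset.card_val] using
    card_mul_abs_medOf_sub_le (S.val.map x) c

lemma abs_sub_tloc_le {C : Finset ℝ} {c : ℝ} (hc : c ∈ C) (p : ℝ) : |p - tloc C p| ≤ |p - c| := by
  obtain ⟨c₀, hc₀, hmin⟩ := C.exists_min_image (fun c => |p - c|) ⟨c, hc⟩
  have hF : (C.filter fun c => ∀ c' ∈ C, |p - c| ≤ |p - c'|).Nonempty :=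
    ⟨c₀, mem_filter.2 ⟨hc₀, hmin⟩⟩
  have ht : tloc C p ∈ C.filter fun c => ∀ c' ∈ C, |p - c| ≤ |p - c'| := by
    rw [tloc, ← Finset.coe_min' hF, WithTop.untopD_coe]
    exact min'_mem _ _
  exact (mem_filter.1 ht).2 c hc

lemma sum_abs_sub_le_sum_abs_sub_add_card_mul {ι : Type*} (S : Finset ι) (x : ι → ℝ) (a b : ℝ) :
    ∑ i ∈ S, |x i - a| ≤ ∑ i ∈ S, |x i - b| + S.card * |b - a| :=
  calc ∑ i ∈ S, |x i - a| ≤ ∑ i ∈ S, (|x i - b| + |b - a|) :=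
        sum_le_sum fun i _ => abs_sub_le _ _ _
    _ = ∑ i ∈ S, |x i - b| + S.card * |b - a| := by
        rw [sum_add_distrib, sum_const, nsmul_eq_mul]

lemma sum_abs_sub_tloc_medianPos_le {C : Finset ℝ} {c : ℝ} (hc : c ∈ C) (S : Finset ℕ)
    (x : ℕ → ℝ) : ∑ i ∈ S, |x i - tloc C (medianPos S x)| ≤ 3 * ∑ i ∈ S, |x i - c| := by
  set m := medianPos S x
  have hclose : |m - tloc C m| ≤ |m - c| := abs_sub_tloc_le hc m
  have hcard : (S.card : ℝ) * |m - tloc C m| ≤ S.card * |m - c| := by gcongr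
  linarith [sum_abs_sub_le_sum_abs_sub_add_card_mul S x (tloc C m) m,
    sum_abs_sub_medianPos_le S x c, card_mul_abs_medianPos_sub_le S x c]

lemma card_mul_abs_sub_tloc_medianPos_le {C : Finset ℝ} {c : ℝ} (hc : c ∈ C) (S : Finset ℕ)
    (x : ℕ → ℝ) : S.card * |c - tloc C (medianPos S x)| ≤ 4 * ∑ i ∈ S, |x i - c| := by
  set m := medianPos S x
  have hdist : |c - tloc C m| ≤ 2 * |m - c| :=
    calc |c - tloc C m| ≤ |c - m| + |m - tloc C m| := abs_sub_le _ _ _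
      _ ≤ 2 * |m - c| := by rw [abs_sub_comm c m]; linarith [abs_sub_tloc_le hc m]
  have hcard : (S.card : ℝ) * |c - tloc C m| ≤ S.card * (2 * |m - c|) := by gcongr
  linarith [card_mul_abs_medianPos_sub_le S x c]

section Cost

variable {x : ℕ → ℝ} {N1 N2 : Finset ℕ} {i : ℕ}

lemma cost_nonneg (y : ℝ × ℝ) : 0 ≤ cost x N1 N2 i y := by
  unfold cost
  split_ifs <;> positivity

lemma abs_sub_fst_le_cost (hi : i ∈ N1) (y : ℝ × ℝ) : |x i - y.1| ≤ cost x N1 N2 i y := by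
  unfold cost
  split_ifs <;> simp

lemma abs_sub_snd_le_cost (hi : i ∈ N2) (y : ℝ × ℝ) : |x i - y.2| ≤ cost x N1 N2 i y := by
  unfold cost
  split_ifs <;> simp

lemma cost_le_add (hi : i ∈ N1 ∪ N2) (y : ℝ × ℝ) :
    cost x N1 N2 i y ≤
      (if i ∈ N1 then |x i - y.1| else 0) + (if i ∈ N2 then |x i - y.2| else 0) := by
  unfold cost
  split_ifs <;> simp_all

end Cost

section SocialCost

variable {x : ℕ → ℝ} {N N1 N2 : Finset ℕ}

lemma SC_le_sum_add_sum (hU : N1 ∪ N2 = N) (y : ℝ × ℝ) :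
    SC x N1 N2 N y ≤ ∑ i ∈ N1, |x i - y.1| + ∑ i ∈ N2, |x i - y.2| := by
  calc SC x N1 N2 N y
      ≤ ∑ i ∈ N, ((if i ∈ N1 then |x i - y.1| else 0) + (if i ∈ N2 then |x i - y.2| else 0)) :=
        sum_le_sum fun i hi => cost_le_add (hU ▸ hi) y
    _ = ∑ i ∈ N1, |x i - y.1| + ∑ i ∈ N2, |x i - y.2| := by
        rw [sum_add_distrib, sum_ite_mem, sum_ite_mem, ← hU, union_inter_cancel_left,
          union_inter_cancel_right]

lemma sum_abs_sub_fst_le_SC (hN1 : N1 ⊆ N) (y : ℝ × ℝ) :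
    ∑ i ∈ N1, |x i - y.1| ≤ SC x N1 N2 N y :=
  calc ∑ i ∈ N1, |x i - y.1| ≤ ∑ i ∈ N1, cost x N1 N2 i y :=
        sum_le_sum fun _ hi => abs_sub_fst_le_cost hi y
    _ ≤ SC x N1 N2 N y := sum_le_sum_of_subset_of_nonneg hN1 fun _ _ _ => cost_nonneg y

lemma sum_sdiff_add_sum_le_SC (hU : N1 ∪ N2 ⊆ N) (y : ℝ × ℝ) :
    ∑ i ∈ N1 \ N2, |x i - y.1| + ∑ i ∈ N2, |x i - y.2| ≤ SC x N1 N2 N y :=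
  calc ∑ i ∈ N1 \ N2, |x i - y.1| + ∑ i ∈ N2, |x i - y.2|
      ≤ ∑ i ∈ N1 \ N2, cost x N1 N2 i y + ∑ i ∈ N2, cost x N1 N2 i y :=
        add_le_add (sum_le_sum fun _ hi => abs_sub_fst_le_cost (mem_sdiff.1 hi).1 y)
          (sum_le_sum fun _ hi => abs_sub_snd_le_cost hi y)
    _ = ∑ i ∈ N1 ∪ N2, cost x N1 N2 i y := by
        rw [← sum_union sdiff_disjoint, sdiff_union_self_eq_union]
    _ ≤ SC x N1 N2 N y := sum_le_sum_of_subset_of_nonneg hU fun _ _ _ => cost_nonneg y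

end SocialCost

theorem case_one_one_seven_approx_general
    (N N1 N2 : Finset ℕ) (x : ℕ → ℝ) (C : Finset ℝ)
    (hU : N1 ∪ N2 = N)
    (hcase : (N1 ∩ N2).card ≤ (N1 \ N2).card)
    (y1 y2 : ℝ) (hy1 : y1 ∈ C) (hy2 : y2 ∈ C) :
    SC x N1 N2 N (tloc C (medianPos (N1 \ N2) x), tloc C (medianPos N2 x)) ≤
      7 * SC x N1 N2 N (y1, y2) := by
  set w1 := tloc C (medianPos (N1 \ N2) x)
  set w2 := tloc C (medianPos N2 x)
  have hA : ∑ i ∈ N1 \ N2, |x i - w1| ≤ 3 * ∑ i ∈ N1 \ N2, |x i - y1| :=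
    sum_abs_sub_tloc_medianPos_le hy1 (N1 \ N2) x
  have hB : ∑ i ∈ N2, |x i - w2| ≤ 3 * ∑ i ∈ N2, |x i - y2| :=
    sum_abs_sub_tloc_medianPos_le hy2 N2 x
  have hI : ∑ i ∈ N1 ∩ N2, |x i - w1| ≤
      ∑ i ∈ N1 ∩ N2, |x i - y1| + 4 * ∑ i ∈ N1 \ N2, |x i - y1| := by
    have hcard : ((N1 ∩ N2).card : ℝ) * |y1 - w1| ≤ (N1 \ N2).card * |y1 - w1| := by
      gcongr
    linarith [sum_abs_sub_le_sum_abs_sub_add_card_mul (N1 ∩ N2) x w1 y1,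
      card_mul_abs_sub_tloc_medianPos_le hy1 (N1 \ N2) x]
  have hSC : SC x N1 N2 N (w1, w2) ≤ ∑ i ∈ N1, |x i - w1| + ∑ i ∈ N2, |x i - w2| :=
    SC_le_sum_add_sum hU (w1, w2)
  have hOPT₁ : ∑ i ∈ N1, |x i - y1| ≤ SC x N1 N2 N (y1, y2) :=
    sum_abs_sub_fst_le_SC (subset_union_left.trans hU.le) (y1, y2)
  have hOPT₂ : ∑ i ∈ N1 \ N2, |x i - y1| + ∑ i ∈ N2, |x i - y2| ≤ SC x N1 N2 N (y1, y2) :=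
    sum_sdiff_add_sum_le_SC hU.le (y1, y2)
  have hB_nonneg : 0 ≤ ∑ i ∈ N2, |x i - y2| := sum_nonneg fun _ _ => abs_nonneg _
  have hsplit (c : ℝ) : ∑ i ∈ N1 ∩ N2, |x i - c| + ∑ i ∈ N1 \ N2, |x i - c| = ∑ i ∈ N1, |x i - c| :=
    sum_inter_add_sum_sdiff N1 N2 _
  linarith [hsplit w1, hsplit y1]

/-- Case 1.1 of the social-cost analysis: when `|N₁| ≥ |N₂|`, `|N₁ \ N₂| ≥ |N₁ ∩ N₂|`
and `t(m₂) ≠ t(m₁)`, the solution `(t(m₁), t(m₂))` is 7-approximate for the social cost. -/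
theorem case_one_one_seven_approx
    (N N1 N2 : Finset ℕ) (x : ℕ → ℝ) (C : Finset ℝ)
    (hN : N.Nonempty) (h1 : N1.Nonempty) (h2 : N2.Nonempty)
    (hU : N1 ∪ N2 = N) (hC : 2 ≤ C.card)
    (hcards : N2.card ≤ N1.card)
    (hcase : (N1 ∩ N2).card ≤ (N1 \ N2).card)
    (hne : tloc C (medianPos N2 x) ≠ tloc C (medianPos (N1 \ N2) x))
    (y1 y2 : ℝ) (hy1 : y1 ∈ C) (hy2 : y2 ∈ C) (hy : y1 ≠ y2) :
    SC x N1 N2 N (tloc C (medianPos (N1 \ N2) x), tloc C (medianPos N2 x)) ≤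
      7 * SC x N1 N2 N (y1, y2) :=
  case_one_one_seven_approx_general N N1 N2 x C hU hcase y1 y2 hy1 hy2
end

section
/- (Case (a) of the max-cost analysis.) Consider a facility-location instance with |N₁| ≥ |N₂|, and let (w₁,w₂) be the output of the Conditional-Median mechanism. Then for every feasible solution (y₁,y₂) and every agent i ∈ N₁, |x_i − w₁| ≤ 3 · MC(y₁,y₂). -/
open Finset

lemma abs_sub_tloc_le_three_mul {C : Finset ℝ} {a b y r : ℝ} (hy : y ∈ C)
    (ha : |a - y| ≤ r) (hb : |b - y| ≤ r) : |a - tloc C b| ≤ 3 * r := by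
  have hby : |y - b| ≤ r := by rwa [abs_sub_comm]
  have hbt : |b - tloc C b| ≤ r := (abs_sub_tloc_le hy b).trans hb
  calc |a - tloc C b| ≤ |a - y| + |y - b| + |b - tloc C b| := by
        linarith [abs_sub_le a y b, abs_sub_le a b (tloc C b)]
    _ ≤ 3 * r := by linarith

lemma medOf_mem {l : Multiset ℝ} (hl : l ≠ 0) : medOf l ∈ l := by
  have hidx : (Multiset.card l + 1) / 2 - 1 < (l.sort (· ≤ ·)).length := by
    rw [Multiset.length_sort]
    have := Multiset.card_pos.mpr hl
    omega
  rw [medOf, List.getD_eq_getElem _ 0 hidx, ← Multiset.mem_sort (· ≤ ·)]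
  exact List.getElem_mem hidx

lemma exists_eq_medianPos {S : Finset ℕ} (hS : S.Nonempty) (x : ℕ → ℝ) :
    ∃ j ∈ S, x j = medianPos S x :=
  Multiset.mem_map.mp (medOf_mem (by simpa using hS.ne_empty))

lemma exists_condMedian_fst_eq_tloc_medianPos {N1 : Finset ℕ} (h1 : N1.Nonempty)
    (x : ℕ → ℝ) (N2 : Finset ℕ) (C : Finset ℝ) :
    ∃ S ⊆ N1, S.Nonempty ∧ (condMedian x N1 N2 C).1 = tloc C (medianPos S x) := by
  rw [condMedian]
  split_ifs with hcard
  · refine ⟨N1 \ N2, sdiff_subset, ?_, rfl⟩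
    rw [nonempty_iff_ne_empty]
    intro hempty
    rw [hempty, inter_eq_left.mpr (sdiff_eq_empty_iff_subset.mp hempty)] at hcard
    exact h1.ne_empty (card_eq_zero.mp (Nat.le_zero.mp hcard))
  · exact ⟨N1 ∩ N2, inter_subset_left, card_pos.mp (by omega), rfl⟩

lemma abs_sub_fst_le_MC {N N1 N2 : Finset ℕ} (hU : N1 ∪ N2 = N) (hN : N.Nonempty)
    (x : ℕ → ℝ) (y : ℝ × ℝ) {i : ℕ} (hi : i ∈ N1) :
    |x i - y.1| ≤ MC x N1 N2 N hN y := by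
  have hcost : |x i - y.1| ≤ cost x N1 N2 i y := by
    by_cases hi2 : i ∈ N2 <;> simp [cost, hi, hi2]
  exact hcost.trans (le_sup' (fun k => cost x N1 N2 k y) (hU ▸ mem_union_left N2 hi))

theorem maxCost_case_a_general
    (N N1 N2 : Finset ℕ) (x : ℕ → ℝ) (C : Finset ℝ)
    (hN : N.Nonempty)
    (hU : N1 ∪ N2 = N)
    (hcards : N2.card ≤ N1.card)
    (y1 y2 : ℝ) (hy1 : y1 ∈ C)
    (i : ℕ) (hi : i ∈ N1) :
    |x i - (mechOutput x N1 N2 C).1| ≤ 3 * MC x N1 N2 N hN (y1, y2) := by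
  obtain ⟨S, hS1, hS, hw⟩ := exists_condMedian_fst_eq_tloc_medianPos ⟨i, hi⟩ x N2 C
  obtain ⟨j, hjS, hj⟩ := exists_eq_medianPos hS x
  rw [mechOutput, if_pos hcards, hw, ← hj]
  exact abs_sub_tloc_le_three_mul hy1 (abs_sub_fst_le_MC hU hN x (y1, y2) hi)
    (abs_sub_fst_le_MC hU hN x (y1, y2) (hS1 hjS))

/-- Case (a) of the max-cost analysis: every agent approving `F₁` is within three times
the optimal max cost from the location where the mechanism places `F₁`. -/
theorem maxCost_case_a
    (N N1 N2 : Finset ℕ) (x : ℕ → ℝ) (C : Finset ℝ)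
    (hN : N.Nonempty) (h1 : N1.Nonempty) (h2 : N2.Nonempty)
    (hU : N1 ∪ N2 = N) (hC : 2 ≤ C.card)
    (hcards : N2.card ≤ N1.card)
    (y1 y2 : ℝ) (hy1 : y1 ∈ C) (hy2 : y2 ∈ C) (hy : y1 ≠ y2)
    (i : ℕ) (hi : i ∈ N1) :
    |x i - (mechOutput x N1 N2 C).1| ≤ 3 * MC x N1 N2 N hN (y1, y2) :=
  maxCost_case_a_general N N1 N2 x C hN hU hcards y1 y2 hy1 i hi
end
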